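/- arXiv:2305.09292 — 2 statements merged into one kernel-verified Lean document; each statement's English description precedes it below -/
import Mathlib

section
/- Let V be a finite set with a positive measure π, let P be a self-adjoint Markov operator on ℓ²(V, π) (i.e. P is given by a Markov kernel reversible with respect to π), let B ⊂ V, and let c ∈ (0, 1). Suppose that for every g : V → ℝ with g|_B ≡ 0 one has ⟨g − P g, g⟩_{ℓ²(π)} ≥ c ‖g‖²_{ℓ²(π)}. Define the Dirichlet-restricted operator P_B f = 1_{V∖B} · P(1_{V∖B} · f). Then the ℓ²(π) → ℓ²(π) operator norm of P_B satisfies ‖P_B‖ ≤ 1 − c. -/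
/-!
The kernel of `P_B = 1_{V∖B} P 1_{V∖B}` is entrywise nonnegative, so `|⟨P_B f, f⟩| ≤ ⟨P g, g⟩`
for `g = 1_{V∖B} |f|`, which vanishes on `B`; the spectral-gap hypothesis applied to `g` bounds this
by `(1 - c) ‖g‖² ≤ (1 - c) ‖f‖²`. Reversibility makes `P_B` self-adjoint on `ℓ²(π)`, and for a
self-adjoint operator a bound `M` on the quadratic form bounds the operator norm: testing the form
on `M f ± P_B f` gives `‖P_B f‖² ≤ M² ‖f‖²`.
-/

open Finset Matrix

theorem LinearMap.BilinForm.apply_map_map_le_of_abs_apply_map_le {E : Type*} [AddCommGroup E]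
    [Module ℝ E] (b : LinearMap.BilinForm ℝ E) (T : E →ₗ[ℝ] E)
    (hT : ∀ u v, b (T u) v = b u (T v)) {M : ℝ} (hM : 0 < M)
    (hb : ∀ u, |b (T u) u| ≤ M * b u u) (f : E) :
    b (T f) (T f) ≤ M ^ 2 * b f f := by
  -- Test the bound on `M f ± T f`: the difference of the two forms is `4 M b (T f) (T f)`.
  have hTT : b (T (T f)) f = b (T f) (T f) := hT (T f) f
  have hplus := (abs_le.mp (hb (M • f + T f))).2
  have hminus := (abs_le.mp (hb (M • f - T f))).1
  simp only [map_add, map_sub, map_smul, LinearMap.add_apply, LinearMap.sub_apply,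
    LinearMap.smul_apply, smul_eq_mul, hTT] at hplus hminus
  have key : 2 * M * b (T f) (T f) ≤ 2 * M * (M ^ 2 * b f f) := by linarith
  exact le_of_mul_le_mul_left key (by positivity)

section WeightedL2

variable {V : Type*}

section VanishOn

variable (B : Set V) [DecidablePred (· ∈ B)]

def vanishOn : (V → ℝ) →ₗ[ℝ] V → ℝ where
  toFun f w := if w ∈ B then 0 else f w
  map_add' f g := by ext w; by_cases hw : w ∈ B <;> simp [hw]
  map_smul' a f := by ext w; by_cases hw : w ∈ B <;> simp [hw]

theorem vanishOn_apply (f : V → ℝ) (w : V) : vanishOn B f w = if w ∈ B then 0 else f w := rfl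

theorem vanishOn_abs (f : V → ℝ) : vanishOn B |f| = |vanishOn B f| := by
  ext w; by_cases hw : w ∈ B <;> simp [vanishOn_apply, hw]

end VanishOn

variable [Fintype V]

def weightedInner (π : V → ℝ) : LinearMap.BilinForm ℝ (V → ℝ) :=
  LinearMap.mk₂ ℝ (fun f g => ∑ w, f w * g w * π w)
    (fun f f' g => by simp only [Pi.add_apply, add_mul, sum_add_distrib])
    (fun a f g => by
      simp only [Pi.smul_apply, smul_eq_mul, mul_sum]
      exact sum_congr rfl fun _ _ => by ring)
    (fun f g g' => by simp only [Pi.add_apply, mul_add, add_mul, sum_add_distrib])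
    (fun a f g => by
      simp only [Pi.smul_apply, smul_eq_mul, mul_sum]
      exact sum_congr rfl fun _ _ => by ring)

theorem weightedInner_apply (π : V → ℝ) (f g : V → ℝ) :
    weightedInner π f g = ∑ w, f w * g w * π w := rfl

theorem weightedInner_abs_abs (π : V → ℝ) (f : V → ℝ) :
    weightedInner π |f| |f| = weightedInner π f f := by
  simp only [weightedInner_apply, Pi.abs_apply, abs_mul_abs_self]

theorem abs_weightedInner_mulVec_le {π : V → ℝ} (hπ : ∀ w, 0 ≤ π w) {p : V → V → ℝ}
    (hp : ∀ w v, 0 ≤ p w v) (f : V → ℝ) :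
    |weightedInner π (of p *ᵥ f) f| ≤ weightedInner π (of p *ᵥ |f|) |f| := by
  simp only [weightedInner_apply, mulVec, dotProduct, of_apply, Pi.abs_apply]
  refine (abs_sum_le_sum_abs _ _).trans (sum_le_sum fun w _ => ?_)
  rw [abs_mul, abs_mul, abs_of_nonneg (hπ w)]
  gcongr ?_ * _ * _
  · exact hπ w
  refine (abs_sum_le_sum_abs _ _).trans_eq (sum_congr rfl fun v _ => ?_)
  rw [abs_mul, abs_of_nonneg (hp w v)]

theorem weightedInner_mulVec_comm {π : V → ℝ} {p : V → V → ℝ}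
    (hrev : ∀ w v, π w * p w v = π v * p v w) (f g : V → ℝ) :
    weightedInner π (of p *ᵥ f) g = weightedInner π f (of p *ᵥ g) := by
  simp only [weightedInner_apply, mulVec, dotProduct, of_apply, sum_mul, mul_sum]
  rw [sum_comm]
  refine sum_congr rfl fun v _ => sum_congr rfl fun w _ => ?_
  linear_combination (f v * g w) * hrev w v

section Dirichlet

variable (B : Set V) [DecidablePred (· ∈ B)]

theorem weightedInner_vanishOn_comm (π : V → ℝ) (f g : V → ℝ) :
    weightedInner π (vanishOn B f) g = weightedInner π f (vanishOn B g) := by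
  simp only [weightedInner_apply]
  refine sum_congr rfl fun w _ => ?_
  by_cases hw : w ∈ B <;> simp [vanishOn_apply, hw]

theorem weightedInner_vanishOn_self_le {π : V → ℝ} (hπ : ∀ w, 0 ≤ π w) (f : V → ℝ) :
    weightedInner π (vanishOn B f) (vanishOn B f) ≤ weightedInner π f f := by
  refine sum_le_sum fun w _ => ?_
  by_cases hw : w ∈ B
  · simpa [vanishOn_apply, hw] using mul_nonneg (mul_self_nonneg (f w)) (hπ w)
  · simp [vanishOn_apply, hw]

def dirichletOp (p : V → V → ℝ) : (V → ℝ) →ₗ[ℝ] V → ℝ :=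
  vanishOn B ∘ₗ (of p).mulVecLin ∘ₗ vanishOn B

theorem dirichletOp_apply (p : V → V → ℝ) (f : V → ℝ) (w : V) :
    dirichletOp B p f w = if w ∈ B then 0 else ∑ v, p w v * (if v ∈ B then 0 else f v) := rfl

theorem weightedInner_mulVec_self_le_of_gap {π : V → ℝ} {p : V → V → ℝ} {c : ℝ} {g : V → ℝ}
    (hgap : c * ∑ w, g w ^ 2 * π w ≤ ∑ w, (g w - ∑ v, p w v * g v) * g w * π w) :
    weightedInner π (of p *ᵥ g) g ≤ (1 - c) * weightedInner π g g := by
  have hsq : ∑ w, g w ^ 2 * π w = weightedInner π g g :=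
    sum_congr rfl fun w _ => by rw [sq]
  have hdiff : ∑ w, (g w - ∑ v, p w v * g v) * g w * π w
      = weightedInner π g g - weightedInner π (of p *ᵥ g) g := by
    simp only [weightedInner_apply, mulVec, dotProduct, of_apply, ← sum_sub_distrib]
    exact sum_congr rfl fun w _ => by ring
  rw [hsq, hdiff] at hgap
  linarith

theorem weightedInner_dirichletOp_comm {π : V → ℝ} {p : V → V → ℝ}
    (hrev : ∀ w v, π w * p w v = π v * p v w) (f g : V → ℝ) :
    weightedInner π (dirichletOp B p f) g = weightedInner π f (dirichletOp B p g) := by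
  simp only [dirichletOp, LinearMap.comp_apply, mulVecLin_apply]
  rw [weightedInner_vanishOn_comm, weightedInner_mulVec_comm hrev, weightedInner_vanishOn_comm]

theorem abs_weightedInner_dirichletOp_self_le {π : V → ℝ} (hπ : ∀ w, 0 ≤ π w) {p : V → V → ℝ}
    (hp : ∀ w v, 0 ≤ p w v) {c : ℝ} (hc1 : c < 1)
    (hgap : ∀ g : V → ℝ, (∀ x ∈ B, g x = 0) →
      c * ∑ w, g w ^ 2 * π w ≤ ∑ w, (g w - ∑ v, p w v * g v) * g w * π w) (f : V → ℝ) :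
    |weightedInner π (dirichletOp B p f) f| ≤ (1 - c) * weightedInner π f f := by
  have hg : weightedInner π (of p *ᵥ vanishOn B |f|) (vanishOn B |f|)
      ≤ (1 - c) * weightedInner π (vanishOn B |f|) (vanishOn B |f|) :=
    weightedInner_mulVec_self_le_of_gap (hgap _ fun _ hx => if_pos hx)
  calc |weightedInner π (dirichletOp B p f) f|
      = |weightedInner π (of p *ᵥ vanishOn B f) (vanishOn B f)| :=
        congrArg abs (weightedInner_vanishOn_comm B π _ f)
    _ ≤ weightedInner π (of p *ᵥ |vanishOn B f|) |vanishOn B f| :=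
        abs_weightedInner_mulVec_le hπ hp _
    _ = weightedInner π (of p *ᵥ vanishOn B |f|) (vanishOn B |f|) := by rw [vanishOn_abs]
    _ ≤ (1 - c) * weightedInner π (vanishOn B |f|) (vanishOn B |f|) := hg
    _ ≤ (1 - c) * weightedInner π |f| |f| :=
        mul_le_mul_of_nonneg_left (weightedInner_vanishOn_self_le B hπ |f|) (sub_nonneg.2 hc1.le)
    _ = (1 - c) * weightedInner π f f := by rw [weightedInner_abs_abs]

end Dirichlet

end WeightedL2

theorem stmt1_general {V : Type*} [Fintype V]
    (π : V → ℝ) (hπ : ∀ w, 0 < π w)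
    (p : V → V → ℝ)
    (hp : ∀ w v, 0 ≤ p w v)
    (hrev : ∀ w v, π w * p w v = π v * p v w)
    (B : Set V) [DecidablePred (· ∈ B)]
    (c : ℝ) (hc1 : c < 1)
    (hgap : ∀ g : V → ℝ, (∀ x ∈ B, g x = 0) →
      c * ∑ w, g w ^ 2 * π w ≤ ∑ w, (g w - ∑ v, p w v * g v) * g w * π w) :
    ∀ f : V → ℝ,
      ∑ w, (if w ∈ B then (0 : ℝ) else ∑ v, p w v * (if v ∈ B then 0 else f v)) ^ 2 * π w
        ≤ (1 - c) ^ 2 * ∑ w, f w ^ 2 * π w := by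
  intro f
  have hπ' : ∀ w, 0 ≤ π w := fun w => (hπ w).le
  have h := (weightedInner π).apply_map_map_le_of_abs_apply_map_le (dirichletOp B p)
    (weightedInner_dirichletOp_comm B hrev) (sub_pos.2 hc1)
    (abs_weightedInner_dirichletOp_self_le B hπ' hp hc1 hgap) f
  simpa only [weightedInner_apply, dirichletOp_apply, ← sq] using h

theorem stmt1 {V : Type*} [Fintype V]
    (π : V → ℝ) (hπ : ∀ w, 0 < π w)
    (p : V → V → ℝ)
    (hp : ∀ w v, 0 ≤ p w v)
    (hrow : ∀ w, ∑ v, p w v = 1)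
    (hrev : ∀ w v, π w * p w v = π v * p v w)
    (B : Set V) [DecidablePred (· ∈ B)]
    (c : ℝ) (hc0 : 0 < c) (hc1 : c < 1)
    (hgap : ∀ g : V → ℝ, (∀ x ∈ B, g x = 0) →
      c * ∑ w, g w ^ 2 * π w ≤ ∑ w, (g w - ∑ v, p w v * g v) * g w * π w) :
    ∀ f : V → ℝ,
      ∑ w, (if w ∈ B then (0 : ℝ) else ∑ v, p w v * (if v ∈ B then 0 else f v)) ^ 2 * π w
        ≤ (1 - c) ^ 2 * ∑ w, f w ^ 2 * π w :=
  stmt1_general π hπ p hp hrev B c hc1 hgap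
end

section
/- Let G = (V, E) be a finite graph, let A, B ⊂ V be disjoint nonempty sets, and suppose there is a bijection φ : A → B such that {v, φ(v)} ∈ E for every v ∈ A. Then for every f : V → ℝ, (Σ_{v ∈ A} f(v) − Σ_{v ∈ B} f(v))² ≤ #A · D(f), where D(f) = Σ_{{w, w'} ∈ E} (f(w) − f(w'))². In particular, (avg_A f − avg_B f)² ≤ D(f) / #A. -/
/-!
Writing `∑_A f - ∑_B f = ∑_{v ∈ A} (f v - f (φ v))`, Cauchy–Schwarz bounds its square by
`#A · ∑_{v ∈ A} (f v - f (φ v))²`. The matched edges `{v, φ v}` are distinct edges of `G`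
(their endpoints lie in the disjoint sets `A` and `B`), so the last sum is at most the energy.
Dividing by `#A² = #A · #B` gives the statement about averages.
-/

open Finset

namespace SimpleGraph

variable {V : Type*} [Fintype V] (G : SimpleGraph V) [DecidableRel G.Adj] (f : V → ℝ)

noncomputable def localEnergy (v : V) : ℝ :=
  ∑ w, if G.Adj v w then (f v - f w) ^ 2 else 0

/-- Each edge is counted once from each endpoint, hence the factor `1 / 2`. -/
noncomputable def dirichletEnergy : ℝ :=
  (1 : ℝ) / 2 * ∑ v, G.localEnergy f v

variable {G}

theorem localEnergy_nonneg (v : V) : 0 ≤ G.localEnergy f v :=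
  sum_nonneg fun w _ => by split_ifs <;> positivity

theorem sq_sub_le_localEnergy {v w : V} (h : G.Adj v w) :
    (f v - f w) ^ 2 ≤ G.localEnergy f v := by
  have := single_le_sum (f := fun w => if G.Adj v w then (f v - f w) ^ 2 else 0)
    (fun w _ => by split_ifs <;> positivity) (mem_univ w)
  simpa only [localEnergy, if_pos h] using this

/-- Counting each edge `{v, φ v}` from both endpoints uses the disjoint vertex sets `A` and
`φ '' A`, so twice the left-hand side is at most `∑ v, localEnergy v`. -/
theorem sum_sq_sub_le_dirichletEnergy [DecidableEq V] {A : Finset V} {φ : V → V}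
    (hφ : Set.InjOn φ A) (hdisj : Disjoint A (A.image φ)) (hadj : ∀ v ∈ A, G.Adj v (φ v)) :
    ∑ v ∈ A, (f v - f (φ v)) ^ 2 ≤ G.dirichletEnergy f := by
  have hleft : ∑ v ∈ A, (f v - f (φ v)) ^ 2 ≤ ∑ v ∈ A, G.localEnergy f v :=
    sum_le_sum fun v hv => sq_sub_le_localEnergy f (hadj v hv)
  have hright : ∑ v ∈ A, (f v - f (φ v)) ^ 2 ≤ ∑ v ∈ A.image φ, G.localEnergy f v := by
    rw [sum_image hφ]
    refine sum_le_sum fun v hv => ?_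
    rw [← neg_sub, neg_sq]
    exact sq_sub_le_localEnergy f (hadj v hv).symm
  have hunion : ∑ v ∈ A ∪ A.image φ, G.localEnergy f v ≤ ∑ v, G.localEnergy f v :=
    sum_le_sum_of_subset_of_nonneg (subset_univ _) fun v _ _ => localEnergy_nonneg f v
  rw [sum_union hdisj] at hunion
  unfold dirichletEnergy
  linarith

theorem sq_sum_sub_sum_le_card_mul_dirichletEnergy [DecidableEq V] {A B : Finset V}
    {φ : V → V} (hφ : Set.BijOn φ A B) (hdisj : Disjoint A B)
    (hadj : ∀ v ∈ A, G.Adj v (φ v)) :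
    (∑ v ∈ A, f v - ∑ v ∈ B, f v) ^ 2 ≤ #A * G.dirichletEnergy f := by
  obtain rfl : A.image φ = B := (image_eq_iff_bijOn_of_card (hφ.finsetCard_eq φ).le).2 hφ
  rw [sum_image hφ.injOn, ← sum_sub_distrib]
  calc (∑ v ∈ A, (f v - f (φ v))) ^ 2 ≤ #A * ∑ v ∈ A, (f v - f (φ v)) ^ 2 :=
        sq_sum_le_card_mul_sum_sq
    _ ≤ #A * G.dirichletEnergy f := by
        gcongr
        exact sum_sq_sub_le_dirichletEnergy f hφ.injOn hdisj hadj

end SimpleGraph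

theorem sq_div_card_sub_div_card_le {V : Type*} {A B : Finset V} (hcard : #B = #A)
    (f : V → ℝ) {D : ℝ} (h : (∑ v ∈ A, f v - ∑ v ∈ B, f v) ^ 2 ≤ #A * D) :
    ((∑ v ∈ A, f v) / #A - (∑ v ∈ B, f v) / #B) ^ 2 ≤ D / #A := by
  rcases A.eq_empty_or_nonempty with rfl | hA
  · simp_all
  have hA : (0 : ℝ) < #A := by exact_mod_cast hA.card_pos
  rw [hcard, div_sub_div_same, div_pow, div_le_div_iff₀ (by positivity) hA]
  nlinarith

theorem stmt5_general {V : Type*} [Fintype V] [DecidableEq V]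
    (G : SimpleGraph V) [DecidableRel G.Adj]
    (A B : Finset V) (hdisj : Disjoint A B)
    (φ : V → V) (hφ : Set.BijOn φ ↑A ↑B) (hadj : ∀ v ∈ A, G.Adj v (φ v))
    (f : V → ℝ) :
    ((∑ v ∈ A, f v) - ∑ v ∈ B, f v) ^ 2
        ≤ A.card * ((1 : ℝ) / 2 * ∑ w, ∑ w', if G.Adj w w' then (f w - f w') ^ 2 else 0) ∧
    ((∑ v ∈ A, f v) / A.card - (∑ v ∈ B, f v) / B.card) ^ 2
        ≤ ((1 : ℝ) / 2 * ∑ w, ∑ w', if G.Adj w w' then (f w - f w') ^ 2 else 0) / A.card := by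
  have h := G.sq_sum_sub_sum_le_card_mul_dirichletEnergy f hφ hdisj hadj
  exact ⟨h, sq_div_card_sub_div_card_le (hφ.finsetCard_eq φ).symm f h⟩

theorem stmt5 {V : Type*} [Fintype V] [DecidableEq V]
    (G : SimpleGraph V) [DecidableRel G.Adj]
    (A B : Finset V) (hA : A.Nonempty) (hB : B.Nonempty) (hdisj : Disjoint A B)
    (φ : V → V) (hφ : Set.BijOn φ ↑A ↑B) (hadj : ∀ v ∈ A, G.Adj v (φ v))
    (f : V → ℝ) :
    ((∑ v ∈ A, f v) - ∑ v ∈ B, f v) ^ 2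
        ≤ A.card * ((1 : ℝ) / 2 * ∑ w, ∑ w', if G.Adj w w' then (f w - f w') ^ 2 else 0) ∧
    ((∑ v ∈ A, f v) / A.card - (∑ v ∈ B, f v) / B.card) ^ 2
        ≤ ((1 : ℝ) / 2 * ∑ w, ∑ w', if G.Adj w w' then (f w - f w') ^ 2 else 0) / A.card :=
  stmt5_general G A B hdisj φ hφ hadj f
end
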